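/- The digits of the binary expansion of an exponential random variable are mutually independent: if B ~ Exp(λ), the random variables (B_l)_{l∈ℤ} defined by the binary digits of B are mutually independent. -/

import Mathlib

/-!
Memorylessness: on `[0, ∞)` the exponential density satisfies `f (y + c) = e^{-λc} f y`. A set
cut out by conditions on the digits below position `a` is `2 ^ a`-periodic, and translation by
`2 ^ a` maps `{B_a = 0} ∩ [0, ∞)` onto `{B_a = 1} ∩ [0, ∞)`. Hence
`P(A ∩ {B_a = 1}) = e^{-λ 2^a} P(A ∩ {B_a = 0})` for every such `A`, including `A = univ`,
which forces `B_a` to be independent of the lower digits. Induction on the largest index of a finite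
family of digits gives mutual independence.
-/

open MeasureTheory ProbabilityTheory Set

theorem measure_inter_preimage_eq_mul_of_fibers {Ω β : Type*} [MeasurableSpace Ω]
    [MeasurableSpace β] [MeasurableSingletonClass β] {μ : Measure Ω} {f : Ω → β}
    (hf : Measurable f) {s : Finset β} (hs : ∀ x, f x ∈ s) {A : Set Ω}
    (h : ∀ b ∈ s, μ (A ∩ f ⁻¹' {b}) = μ (f ⁻¹' {b}) * μ A) (T : Set β) :
    μ (A ∩ f ⁻¹' T) = μ (f ⁻¹' T) * μ A := by
  classical
  have hT : f ⁻¹' T = f ⁻¹' ↑(s.filter (· ∈ T)) := by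
    ext x; simp [hs x]
  have hfib : ∀ b ∈ s.filter (· ∈ T), MeasurableSet (f ⁻¹' {b}) :=
    fun b _ => hf (measurableSet_singleton b)
  rw [hT, inter_comm, ← Measure.restrict_apply (hf (Finset.measurableSet _)),
    ← sum_measure_preimage_singleton _ hfib, ← sum_measure_preimage_singleton _ hfib,
    Finset.sum_mul]
  refine Finset.sum_congr rfl fun b hb => ?_
  rw [Measure.restrict_apply (hf (measurableSet_singleton b)), inter_comm]
  exact h b (Finset.mem_filter.1 hb).1

theorem expMeasure_inter_Ici_zero (r : ℝ) (E : Set ℝ) :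
    expMeasure r (E ∩ Ici 0) = expMeasure r E := by
  refine measure_inter_conull ?_
  rw [compl_Ici]
  exact (withDensity_apply _ measurableSet_Iio).trans (lintegral_exponentialPDF_of_nonpos le_rfl)

theorem expMeasure_preimage_sub (r : ℝ) {c : ℝ} (hc : 0 ≤ c) {E : Set ℝ}
    (hE : MeasurableSet E) (hE0 : E ⊆ Ici 0) :
    expMeasure r ((· - c) ⁻¹' E) = ENNReal.ofReal (Real.exp (-(r * c))) * expMeasure r E := by
  have hpdf : Measurable (exponentialPDF r) := (measurable_exponentialPDFReal r).ennreal_ofReal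
  have hshift : Measurable fun y => exponentialPDF r (y + c) := hpdf.comp (measurable_add_const c)
  change volume.withDensity (exponentialPDF r) _ = _ * volume.withDensity (exponentialPDF r) _
  rw [withDensity_apply _ (measurable_sub_const c hE), withDensity_apply _ hE,
    ← lintegral_const_mul _ hpdf]
  calc ∫⁻ x in (· - c) ⁻¹' E, exponentialPDF r x
      = ∫⁻ y in E, exponentialPDF r (y + c) := by
        simpa only [sub_add_cancel] using
          (measurePreserving_sub_right volume c).setLIntegral_comp_preimage hE hshift
    _ = ∫⁻ y in E, ENNReal.ofReal (Real.exp (-(r * c))) * exponentialPDF r y := by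
        refine setLIntegral_congr_fun hE fun y hy => ?_
        have hy0 : 0 ≤ y := hE0 hy
        rw [exponentialPDF_of_nonneg (by linarith), exponentialPDF_of_nonneg hy0,
          ← ENNReal.ofReal_mul (Real.exp_nonneg _), mul_left_comm, ← Real.exp_add]
        ring_nf

noncomputable def binaryDigit (l : ℤ) (x : ℝ) : ℤ := ⌊x / 2 ^ l⌋ % 2

theorem measurable_binaryDigit (l : ℤ) : Measurable (binaryDigit l) :=
  (measurable_from_top (f := (· % 2))).comp (Int.measurable_floor.comp (measurable_div_const _))

theorem binaryDigit_mem (l : ℤ) (x : ℝ) : binaryDigit l x ∈ ({0, 1} : Finset ℤ) := by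
  rcases Int.emod_two_eq ⌊x / 2 ^ l⌋ with h | h <;> simp [binaryDigit, h]

theorem binaryDigit_add_two_zpow_of_lt {i a : ℤ} (h : i < a) (x : ℝ) :
    binaryDigit i (x + 2 ^ a) = binaryDigit i x := by
  obtain ⟨k, hk⟩ : ∃ k : ℕ, a - i = k + 1 := ⟨(a - i - 1).toNat, by omega⟩
  have hdiv : (x + 2 ^ a) / 2 ^ i = x / 2 ^ i + ((2 * 2 ^ k : ℤ) : ℝ) := by
    rw [add_div, ← zpow_sub₀ two_ne_zero, hk, zpow_add_one₀ two_ne_zero, zpow_natCast]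
    push_cast
    ring
  rw [binaryDigit, hdiv, Int.floor_add_intCast, Int.add_mul_emod_self_left]
  rfl

theorem binaryDigit_sub_two_zpow (a : ℤ) (x : ℝ) :
    binaryDigit a (x - 2 ^ a) = 1 - binaryDigit a x := by
  have hfloor : ⌊(x - 2 ^ a) / 2 ^ a⌋ = ⌊x / 2 ^ a⌋ - 1 := by
    rw [sub_div, div_self (by positivity)]
    exact_mod_cast Int.floor_sub_one (x / 2 ^ a)
  simp only [binaryDigit, hfloor]
  omega

theorem two_zpow_le_of_binaryDigit_eq_one {a : ℤ} {x : ℝ} (hx : 0 ≤ x)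
    (h : binaryDigit a x = 1) : 2 ^ a ≤ x := by
  have hpos : (0 : ℝ) < 2 ^ a := by positivity
  have hfloor : 1 ≤ ⌊x / 2 ^ a⌋ := by
    have : 0 ≤ ⌊x / 2 ^ a⌋ := Int.floor_nonneg.2 (by positivity)
    unfold binaryDigit at h
    omega
  have := Int.le_floor.1 hfloor
  push_cast at this
  rwa [one_le_div hpos] at this

theorem binaryDigit_one_inter_Ici_eq_preimage (a : ℤ) {A : Set ℝ}
    (hA : ∀ x, x + 2 ^ a ∈ A ↔ x ∈ A) :
    A ∩ binaryDigit a ⁻¹' {1} ∩ Ici 0 =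
      (· - 2 ^ a) ⁻¹' (A ∩ binaryDigit a ⁻¹' {0} ∩ Ici 0) := by
  have hpos : (0 : ℝ) < 2 ^ a := by positivity
  ext x
  have hxA := hA (x - 2 ^ a)
  rw [sub_add_cancel] at hxA
  simp only [mem_inter_iff, mem_preimage, mem_singleton_iff, mem_Ici,
    binaryDigit_sub_two_zpow, ← hxA]
  constructor
  · rintro ⟨⟨hx, h1⟩, hx0⟩
    exact ⟨⟨hx, by omega⟩, sub_nonneg.2 (two_zpow_le_of_binaryDigit_eq_one hx0 h1)⟩
  · rintro ⟨⟨hx, h0⟩, hx0⟩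
    exact ⟨⟨hx, by omega⟩, by linarith⟩

theorem expMeasure_inter_binaryDigit_one (r : ℝ) (a : ℤ) {A : Set ℝ} (hA : MeasurableSet A)
    (hper : ∀ x, x + 2 ^ a ∈ A ↔ x ∈ A) :
    expMeasure r (A ∩ binaryDigit a ⁻¹' {1}) =
      ENNReal.ofReal (Real.exp (-(r * 2 ^ a))) * expMeasure r (A ∩ binaryDigit a ⁻¹' {0}) := by
  have hmeas : MeasurableSet (A ∩ binaryDigit a ⁻¹' {0} ∩ Ici 0) :=
    (hA.inter (measurable_binaryDigit a (measurableSet_singleton 0))).inter measurableSet_Ici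
  rw [← expMeasure_inter_Ici_zero, binaryDigit_one_inter_Ici_eq_preimage a hper,
    expMeasure_preimage_sub r (by positivity) hmeas inter_subset_right, expMeasure_inter_Ici_zero]

theorem expMeasure_inter_binaryDigit_preimage {r : ℝ} (hr : 0 < r) (a : ℤ) {A : Set ℝ}
    (hA : MeasurableSet A) (hper : ∀ x, x + 2 ^ a ∈ A ↔ x ∈ A) (T : Set ℤ) :
    expMeasure r (A ∩ binaryDigit a ⁻¹' T) =
      expMeasure r (binaryDigit a ⁻¹' T) * expMeasure r A := by
  have := isProbabilityMeasure_expMeasure hr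
  set μ := expMeasure r
  set D₀ := binaryDigit a ⁻¹' {0}
  set D₁ := binaryDigit a ⁻¹' {1}
  set c := ENNReal.ofReal (Real.exp (-(r * 2 ^ a)))
  have hD₁ : D₁ = D₀ᶜ := by
    ext x
    have := binaryDigit_mem a x
    simp only [Finset.mem_insert, Finset.mem_singleton] at this
    simp only [D₀, D₁, mem_compl_iff, mem_preimage, mem_singleton_iff]
    omega
  have hsplit : ∀ B, μ (B ∩ D₀) + μ (B ∩ D₁) = μ B := fun B => by
    rw [hD₁]
    exact measure_inter_add_sdiff B (measurable_binaryDigit a (measurableSet_singleton 0))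
  have hA₁ : μ (A ∩ D₁) = c * μ (A ∩ D₀) := expMeasure_inter_binaryDigit_one r a hA hper
  have hU₁ : μ D₁ = c * μ D₀ := by
    simpa using expMeasure_inter_binaryDigit_one r a MeasurableSet.univ (by simp)
  have hU : μ D₀ + c * μ D₀ = 1 := by
    simpa [← hU₁] using hsplit univ
  have hA₀ : μ (A ∩ D₀) = μ D₀ * μ A := by
    calc μ (A ∩ D₀) = (μ D₀ + c * μ D₀) * μ (A ∩ D₀) := by rw [hU, one_mul]
      _ = μ D₀ * (μ (A ∩ D₀) + μ (A ∩ D₁)) := by rw [hA₁]; ring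
      _ = μ D₀ * μ A := by rw [hsplit]
  refine measure_inter_preimage_eq_mul_of_fibers (measurable_binaryDigit a)
    (binaryDigit_mem a) ?_ T
  simp only [Finset.mem_insert, Finset.mem_singleton, forall_eq_or_imp, forall_eq]
  exact ⟨hA₀, by rw [hA₁, hU₁, hA₀]; ring⟩

theorem stmt_2 (lam : ℝ) (hlam : 0 < lam) :
    iIndepFun (m := fun _ : ℤ => (inferInstance : MeasurableSpace ℤ))
      (fun (l : ℤ) (x : ℝ) => ⌊x / 2 ^ l⌋ % 2) (expMeasure lam) := by
  have := isProbabilityMeasure_expMeasure hlam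
  change iIndepFun binaryDigit (expMeasure lam)
  rw [iIndepFun_iff_measure_inter_preimage_eq_mul]
  rintro S sets -
  induction S using Finset.induction_on_max with
  | empty => simp
  | insert a s hlt ih =>
    set A := ⋂ i ∈ s, binaryDigit i ⁻¹' sets i
    have hA : MeasurableSet A :=
      s.measurableSet_biInter fun i _ => measurable_binaryDigit i .of_discrete
    have hper : ∀ x, x + 2 ^ a ∈ A ↔ x ∈ A := fun x => by
      simp only [A, mem_iInter₂, mem_preimage]
      exact forall₂_congr fun i hi => by rw [binaryDigit_add_two_zpow_of_lt (hlt i hi)]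
    rw [Finset.set_biInter_insert, Finset.prod_insert fun ha => (hlt a ha).false, inter_comm,
      expMeasure_inter_binaryDigit_preimage hlam a hA hper, ih]
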